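/- Let E → R be an admissible model semifibration over a Reedy category. If a map of sections α : A → B has the property that the relative latching map Lat_x B ⊔_{Lat_x A} A(x) → B(x) is a (trivial) cofibration for every x ∈ R, then for every y ∈ R the map α_y : A(y) → B(y) is a (trivial) cofibration in E(y). -/

import Mathlib

open CategoryTheory CategoryTheory.Functor CategoryTheory.Limits

universe w w' v₁ v₂ v₃ v₄ u₁ u₂ u₃ u₄

section Sections

variable {C : Type u₁} [Category.{v₁} C] {E : Type u₂} [Category.{v₂} E]
  {D : Type u₃} [Category.{v₃} D]

/-- A section of `E → C` relative to a functor `F : D ⥤ C`, i.e. a section of the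
pullback of `p : E ⥤ C` along `F`: a functor `D ⥤ E` lifting `F` strictly. -/
structure SectOver (F : D ⥤ C) (p : E ⥤ C) : Type max u₂ u₃ v₂ v₃ where
  F' : D ⥤ E
  over_eq : F' ⋙ p = F

variable {F : D ⥤ C} {p : E ⥤ C}

lemma SectOver.obj_over (S : SectOver F p) (d : D) : p.obj (S.F'.obj d) = F.obj d :=
  Functor.congr_obj S.over_eq d

/-- Morphisms of sections are natural transformations all of whose components
are fibrewise (project to identities). -/
instance SectOver.category : Category (SectOver F p) where
  Hom S T := { α : S.F' ⟶ T.F' // ∀ d : D, p.IsHomLift (𝟙 (F.obj d)) (α.app d) }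
  id S := ⟨𝟙 S.F', fun d => IsHomLift.id (S.obj_over d)⟩
  comp {S T U} α β := ⟨α.1 ≫ β.1, fun d => by
    haveI := α.2 d; haveI := β.2 d
    have h : p.IsHomLift (𝟙 (F.obj d) ≫ 𝟙 (F.obj d)) (α.1.app d ≫ β.1.app d) := inferInstance
    simpa using h⟩
  id_comp α := Subtype.ext (Category.id_comp α.1)
  comp_id α := Subtype.ext (Category.comp_id α.1)
  assoc α β γ := Subtype.ext (Category.assoc α.1 β.1 γ.1)

/-- The category of sections of `p : E ⥤ C`. -/
abbrev Sect (p : E ⥤ C) := SectOver (𝟭 C) p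

/-- Evaluation of sections at an object of the base, taking values in the fibre. -/
@[simps] def SectOver.ev (p : E ⥤ C) (F : D ⥤ C) (d : D) :
    SectOver F p ⥤ Fiber p (F.obj d) where
  obj S := ⟨S.F'.obj d, S.obj_over d⟩
  map α := ⟨α.1.app d, α.2 d⟩
  map_id _ := rfl
  map_comp _ _ := rfl

/-- Restriction of sections along a functor between the index categories. -/
def SectOver.restrict {D' : Type u₄} [Category.{v₄} D'] (G : D' ⥤ D) {F : D ⥤ C}
    {F₀ : D' ⥤ C} (hF : G ⋙ F = F₀) (p : E ⥤ C) : SectOver F p ⥤ SectOver F₀ p where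
  obj S := ⟨G ⋙ S.F', by rw [Functor.assoc, S.over_eq, hF]⟩
  map {S T} α := ⟨whiskerLeft G α.1, fun d => by
    have h := α.2 (G.obj d)
    have he : F.obj (G.obj d) = F₀.obj d := Functor.congr_obj hF d
    exact he ▸ h⟩
  map_id _ := Subtype.ext (by aesop_cat)
  map_comp _ _ := Subtype.ext (by aesop_cat)

end Sections

section MatchLatch

variable {C : Type u₁} [Category.{v₁} C] {E : Type u₂} [Category.{v₂} E]
  {D : Type u₃} [Category.{v₃} D] {F : D ⥤ C}

/-- `pt` together with the projections `π` is the matching object of the section `S`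
at `c` relative to the family of arrows selected by `Idx`: it is the limit, computed in
the fibre `E(c)`, of the cartesian restrictions of the values of `S` along the selected
arrows `c ⟶ F(d)`. This is expressed by the universal property: maps into `pt` over
`𝟙 c` correspond to compatible families of maps over the selected arrows. -/
def IsMatchingObj (p : E ⥤ C) (S : SectOver F p) (c : C)
    (Idx : ∀ ⦃d : D⦄, (c ⟶ F.obj d) → Prop) (pt : E) (_ : p.obj pt = c)
    (π : ∀ ⦃d : D⦄ (f : c ⟶ F.obj d), Idx f → (pt ⟶ S.F'.obj d)) : Prop :=
  (∀ ⦃d : D⦄ (f : c ⟶ F.obj d) (hf : Idx f), p.IsHomLift f (π f hf)) ∧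
  (∀ {d d' : D} (g : d ⟶ d') (f : c ⟶ F.obj d) (hf : Idx f)
     (hfg : Idx (f ≫ F.map g)), π (f ≫ F.map g) hfg = π f hf ≫ S.F'.map g) ∧
  ∀ (Z : E), p.obj Z = c →
    ∀ (τ : ∀ ⦃d : D⦄ (f : c ⟶ F.obj d), Idx f → (Z ⟶ S.F'.obj d)),
    (∀ ⦃d : D⦄ (f : c ⟶ F.obj d) (hf : Idx f), p.IsHomLift f (τ f hf)) →
    (∀ {d d' : D} (g : d ⟶ d') (f : c ⟶ F.obj d) (hf : Idx f)
      (hfg : Idx (f ≫ F.map g)), τ (f ≫ F.map g) hfg = τ f hf ≫ S.F'.map g) →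
    ∃! u : Z ⟶ pt, p.IsHomLift (𝟙 c) u ∧
      ∀ ⦃d : D⦄ (f : c ⟶ F.obj d) (hf : Idx f), u ≫ π f hf = τ f hf

/-- `pt` together with the insertions `ι` is the latching object of the section `S`
at `c` relative to the family of arrows selected by `Idx`: it is the colimit, computed
in the fibre `E(c)`, of the opcartesian pushforwards of the values of `S` along the
selected arrows `F(d) ⟶ c`. -/
def IsLatchingObj (p : E ⥤ C) (S : SectOver F p) (c : C)
    (Idx : ∀ ⦃d : D⦄, (F.obj d ⟶ c) → Prop) (pt : E) (_ : p.obj pt = c)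
    (ι : ∀ ⦃d : D⦄ (f : F.obj d ⟶ c), Idx f → (S.F'.obj d ⟶ pt)) : Prop :=
  (∀ ⦃d : D⦄ (f : F.obj d ⟶ c) (hf : Idx f), p.IsHomLift f (ι f hf)) ∧
  (∀ {d d' : D} (g : d ⟶ d') (f' : F.obj d' ⟶ c) (hf' : Idx f')
     (hgf : Idx (F.map g ≫ f')), ι (F.map g ≫ f') hgf = S.F'.map g ≫ ι f' hf') ∧
  ∀ (Z : E), p.obj Z = c →
    ∀ (σ : ∀ ⦃d : D⦄ (f : F.obj d ⟶ c), Idx f → (S.F'.obj d ⟶ Z)),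
    (∀ ⦃d : D⦄ (f : F.obj d ⟶ c) (hf : Idx f), p.IsHomLift f (σ f hf)) →
    (∀ {d d' : D} (g : d ⟶ d') (f' : F.obj d' ⟶ c) (hf' : Idx f')
      (hgf : Idx (F.map g ≫ f')), σ (F.map g ≫ f') hgf = S.F'.map g ≫ σ f' hf') →
    ∃! u : pt ⟶ Z, p.IsHomLift (𝟙 c) u ∧
      ∀ ⦃d : D⦄ (f : F.obj d ⟶ c) (hf : Idx f), ι f hf ≫ u = σ f hf

/-- Bundled matching object data. -/
structure MatchData (p : E ⥤ C) (S : SectOver F p) (c : C)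
    (Idx : ∀ ⦃d : D⦄, (c ⟶ F.obj d) → Prop) where
  pt : E
  hpt : p.obj pt = c
  π : ∀ ⦃d : D⦄ (f : c ⟶ F.obj d), Idx f → (pt ⟶ S.F'.obj d)
  isMatching : IsMatchingObj p S c Idx pt hpt π

/-- Bundled latching object data. -/
structure LatchData (p : E ⥤ C) (S : SectOver F p) (c : C)
    (Idx : ∀ ⦃d : D⦄, (F.obj d ⟶ c) → Prop) where
  pt : E
  hpt : p.obj pt = c
  ι : ∀ ⦃d : D⦄ (f : F.obj d ⟶ c), Idx f → (S.F'.obj d ⟶ pt)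
  isLatching : IsLatchingObj p S c Idx pt hpt ι

end MatchLatch

section Factorization

variable (C : Type u₁) [Category.{v₁} C]

/-- A factorisation category: a category equipped with two subcategories `L` (left class)
and `R` (right class) containing all isomorphisms, such that every morphism factors,
uniquely up to unique isomorphism, as a map of `L` followed by a map of `R`. -/
structure FactorizationCategory where
  L : MorphismProperty C
  R : MorphismProperty C
  L_iso : ∀ {x y : C} (f : x ⟶ y), IsIso f → L f
  R_iso : ∀ {x y : C} (f : x ⟶ y), IsIso f → R f
  L_comp : ∀ {x y z : C} (f : x ⟶ y) (g : y ⟶ z), L f → L g → L (f ≫ g)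
  R_comp : ∀ {x y z : C} (f : x ⟶ y) (g : y ⟶ z), R f → R g → R (f ≫ g)
  factor : ∀ {x y : C} (f : x ⟶ y), ∃ (z : C) (l : x ⟶ z) (r : z ⟶ y),
    L l ∧ R r ∧ l ≫ r = f
  factor_unique : ∀ {x y : C} (f : x ⟶ y) {z z' : C}
    (l : x ⟶ z) (r : z ⟶ y) (l' : x ⟶ z') (r' : z' ⟶ y),
    L l → R r → L l' → R r' → l ≫ r = f → l' ≫ r' = f →
    ∃! e : z ≅ z', l ≫ e.hom = l' ∧ e.hom ≫ r' = r

variable {C}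
variable {E : Type u₂} [Category.{v₂} E]

/-- A semifibration over a factorisation category `(C, L, R)`: cartesian lifts of `L`-maps,
opcartesian lifts of `R`-maps, and every morphism lying over a composite of an `R`-map
followed by an `L`-map factors as an opcartesian morphism, a fibrewise morphism
and a cartesian morphism. -/
structure IsSemifibration (p : E ⥤ C) (FC : FactorizationCategory C) : Prop where
  cartLift : ∀ {c c' : C} (l : c ⟶ c'), FC.L l → ∀ Y : E, p.obj Y = c' →
    ∃ (X : E) (φ : X ⟶ Y), p.IsCartesian l φ
  cocartLift : ∀ {c c' : C} (r : c ⟶ c'), FC.R r → ∀ X : E, p.obj X = c →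
    ∃ (Y : E) (φ : X ⟶ Y), p.IsCocartesian r φ
  fact : ∀ {X Y : E} (α : X ⟶ Y) {c : C} (r : p.obj X ⟶ c) (l : c ⟶ p.obj Y),
    FC.R r → FC.L l → p.map α = r ≫ l →
    ∃ (X' Y' : E) (ρ : X ⟶ X') (φ : X' ⟶ Y') (lam : Y' ⟶ Y),
      p.IsCocartesian r ρ ∧ p.IsHomLift (𝟙 c) φ ∧ p.IsCartesian l lam ∧
        ρ ≫ φ ≫ lam = α

end Factorization

section Reedy

variable (C : Type u₁) [Category.{v₁} C]

/-- A morphism is an identity (up to the induced equality of its endpoints). -/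
def IsIdentityHom {C : Type u₁} [Category.{v₁} C] {x y : C} (f : x ⟶ y) : Prop :=
  ∃ h : x = y, f = eqToHom h

/-- A Reedy structure on `C`: a factorisation system `(L, R) = (R₋, R₊)` together with a
degree function such that the isomorphisms are identities, non-identities of `L = R₋`
lower the degree and non-identities of `R = R₊` raise the degree. -/
structure ReedyStructure extends FactorizationCategory C where
  deg : C → ℕ
  no_iso : ∀ {x y : C} (f : x ⟶ y), IsIso f → IsIdentityHom f
  L_lowers : ∀ {x y : C} (f : x ⟶ y), L f → IsIdentityHom f ∨ deg y < deg x
  R_raises : ∀ {x y : C} (f : x ⟶ y), R f → IsIdentityHom f ∨ deg x < deg y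

variable {C}

/-- A class of morphisms is closed under retracts. -/
def ClosedUnderRetracts {M : Type u₃} [Category.{v₃} M] (P : MorphismProperty M) : Prop :=
  ∀ {A B X Y : M} (f : A ⟶ B) (g : X ⟶ Y) (i₁ : A ⟶ X) (r₁ : X ⟶ A)
    (i₂ : B ⟶ Y) (r₂ : Y ⟶ B), i₁ ≫ r₁ = 𝟙 A → i₂ ≫ r₂ = 𝟙 B →
    i₁ ≫ g = f ≫ i₂ → g ≫ r₂ = r₁ ≫ f → P g → P f

/-- A (Quillen) model structure: weak equivalences, cofibrations and fibrations,
satisfying bicompleteness, two-out-of-three, retract stability, lifting and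
factorisation axioms. -/
structure ModelStructure (M : Type u₃) [Category.{v₃} M] where
  W : MorphismProperty M
  Cof : MorphismProperty M
  Fib : MorphismProperty M
  hasLimits : HasLimitsOfSize.{v₃, v₃} M
  hasColimits : HasColimitsOfSize.{v₃, v₃} M
  W_id : ∀ X : M, W (𝟙 X)
  Cof_id : ∀ X : M, Cof (𝟙 X)
  Fib_id : ∀ X : M, Fib (𝟙 X)
  W_comp : ∀ {X Y Z : M} (f : X ⟶ Y) (g : Y ⟶ Z), W f → W g → W (f ≫ g)
  W_of_comp_left : ∀ {X Y Z : M} (f : X ⟶ Y) (g : Y ⟶ Z), W g → W (f ≫ g) → W f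
  W_of_comp_right : ∀ {X Y Z : M} (f : X ⟶ Y) (g : Y ⟶ Z), W f → W (f ≫ g) → W g
  W_retract : ClosedUnderRetracts W
  Cof_retract : ClosedUnderRetracts Cof
  Fib_retract : ClosedUnderRetracts Fib
  lifting : ∀ {A B X Y : M} (i : A ⟶ B) (f : X ⟶ Y) (a : A ⟶ X) (b : B ⟶ Y),
    Cof i → Fib f → (W i ∨ W f) → a ≫ f = i ≫ b →
    ∃ l : B ⟶ X, i ≫ l = a ∧ l ≫ f = b
  factor₁ : ∀ {X Y : M} (f : X ⟶ Y), ∃ (Z : M) (i : X ⟶ Z) (q : Z ⟶ Y),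
    Cof i ∧ Fib q ∧ W q ∧ i ≫ q = f
  factor₂ : ∀ {X Y : M} (f : X ⟶ Y), ∃ (Z : M) (i : X ⟶ Z) (q : Z ⟶ Y),
    Cof i ∧ W i ∧ Fib q ∧ i ≫ q = f

variable {E : Type u₂} [Category.{v₂} E]

/-- A model semifibration over a Reedy category: a semifibration whose fibres carry
model structures, whose cartesian transition functors along `R₋` are right derivable
and whose opcartesian transition functors along `R₊` are left derivable. -/
structure ModelSemifibration (p : E ⥤ C) (RS : ReedyStructure C) where
  semifib : IsSemifibration p RS.toFactorizationCategory
  ms : ∀ c : C, ModelStructure (Fiber p c)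
  /-- transition functors along `R₋` preserve fibrations and trivial fibrations -/
  rightDerivable : ∀ {c c' : C} (l : c ⟶ c'), RS.L l →
    ∀ (Y₁ Y₂ : Fiber p c') (ψ : Y₁ ⟶ Y₂) (Y₁' Y₂' : Fiber p c)
      (lam₁ : Y₁'.1 ⟶ Y₁.1) (lam₂ : Y₂'.1 ⟶ Y₂.1),
      p.IsCartesian l lam₁ → p.IsCartesian l lam₂ →
      ∀ (χ : Y₁' ⟶ Y₂'), χ.1 ≫ lam₂ = lam₁ ≫ ψ.1 →
        ((ms c').Fib ψ → (ms c).Fib χ) ∧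
        ((ms c').Fib ψ ∧ (ms c').W ψ → (ms c).Fib χ ∧ (ms c).W χ)
  /-- transition functors along `R₊` preserve cofibrations and trivial cofibrations -/
  leftDerivable : ∀ {c c' : C} (r : c ⟶ c'), RS.R r →
    ∀ (X₁ X₂ : Fiber p c) (ψ : X₁ ⟶ X₂) (X₁' X₂' : Fiber p c')
      (ρ₁ : X₁.1 ⟶ X₁'.1) (ρ₂ : X₂.1 ⟶ X₂'.1),
      p.IsCocartesian r ρ₁ → p.IsCocartesian r ρ₂ →
      ∀ (χ : X₁' ⟶ X₂'), ρ₁ ≫ χ.1 = ψ.1 ≫ ρ₂ →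
        ((ms c).Cof ψ → (ms c').Cof χ) ∧
        ((ms c).Cof ψ ∧ (ms c).W ψ → (ms c').Cof χ ∧ (ms c').W χ)

end Reedy

section ReedySections

variable {C : Type u₁} [Category.{v₁} C] {E : Type u₂} [Category.{v₂} E]

/-- Arrows indexing the latching category of `x`: non-identity degree-raising maps
into `x`. -/
def latchIdx (RS : ReedyStructure C) (x : C) : ∀ ⦃d : C⦄, ((𝟭 C).obj d ⟶ x) → Prop :=
  fun _ f => RS.R f ∧ ¬ IsIdentityHom f

/-- Arrows indexing the matching category of `x`: non-identity degree-lowering maps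
out of `x`. -/
def matchIdx (RS : ReedyStructure C) (x : C) : ∀ ⦃d : C⦄, (x ⟶ (𝟭 C).obj d) → Prop :=
  fun _ f => RS.L f ∧ ¬ IsIdentityHom f

variable {p : E ⥤ C} {RS : ReedyStructure C}

/-- The component of a morphism of sections at `x`, as a morphism of the fibre. -/
def Sect.evHom {S T : Sect p} (α : S ⟶ T) (x : C) :
    (Fiber.mk (S.obj_over x) : Fiber p x) ⟶ (Fiber.mk (T.obj_over x) : Fiber p x) :=
  ⟨α.1.app x, α.2 x⟩

/-- The induced comparison of latching objects `Lat_x S ⟶ Lat_x T` of a morphism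
of sections `α : S ⟶ T`. -/
structure LatchMapData (p : E ⥤ C) (RS : ReedyStructure C) {S T : Sect p}
    (α : S ⟶ T) (x : C) where
  DS : LatchData p S x (latchIdx RS x)
  DT : LatchData p T x (latchIdx RS x)
  latMap : DS.pt ⟶ DT.pt
  latMap_lift : p.IsHomLift (𝟙 x) latMap
  latMap_fac : ∀ ⦃d : C⦄ (f : (𝟭 C).obj d ⟶ x) (hf : latchIdx RS x f),
    DS.ι f hf ≫ latMap = α.1.app d ≫ DT.ι f hf

/-- The induced comparison of matching objects `Mat_x S ⟶ Mat_x T`. -/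
structure MatchMapData (p : E ⥤ C) (RS : ReedyStructure C) {S T : Sect p}
    (α : S ⟶ T) (x : C) where
  MS : MatchData p S x (matchIdx RS x)
  MT : MatchData p T x (matchIdx RS x)
  matMap : MS.pt ⟶ MT.pt
  matMap_lift : p.IsHomLift (𝟙 x) matMap
  matMap_fac : ∀ ⦃d : C⦄ (f : x ⟶ (𝟭 C).obj d) (hf : matchIdx RS x f),
    matMap ≫ MT.π f hf = MS.π f hf ≫ α.1.app d

/-- Data exhibiting the relative latching map
`Lat_x T ⊔_{Lat_x S} S(x) ⟶ T(x)` of `α : S ⟶ T` at `x`. -/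
structure RelLatchData (p : E ⥤ C) (RS : ReedyStructure C) {S T : Sect p}
    (α : S ⟶ T) (x : C) extends LatchMapData p RS α x where
  canS : DS.pt ⟶ S.F'.obj x
  canS_lift : p.IsHomLift (𝟙 x) canS
  canS_fac : ∀ ⦃d : C⦄ (f : (𝟭 C).obj d ⟶ x) (hf : latchIdx RS x f),
    DS.ι f hf ≫ canS = S.F'.map f
  canT : DT.pt ⟶ T.F'.obj x
  canT_lift : p.IsHomLift (𝟙 x) canT
  canT_fac : ∀ ⦃d : C⦄ (f : (𝟭 C).obj d ⟶ x) (hf : latchIdx RS x f),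
    DT.ι f hf ≫ canT = T.F'.map f
  P : E
  hP : p.obj P = x
  inl : S.F'.obj x ⟶ P
  inl_lift : p.IsHomLift (𝟙 x) inl
  inr : DT.pt ⟶ P
  inr_lift : p.IsHomLift (𝟙 x) inr
  isPushout : IsPushout (C := Fiber p x)
    ((⟨canS, canS_lift⟩ : (Fiber.mk DS.hpt : Fiber p x) ⟶
      (Fiber.mk (S.obj_over x) : Fiber p x)))
    ((⟨latMap, latMap_lift⟩ : (Fiber.mk DS.hpt : Fiber p x) ⟶
      (Fiber.mk DT.hpt : Fiber p x)))
    ((⟨inl, inl_lift⟩ : (Fiber.mk (S.obj_over x) : Fiber p x) ⟶ (Fiber.mk hP : Fiber p x)))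
    ((⟨inr, inr_lift⟩ : (Fiber.mk DT.hpt : Fiber p x) ⟶ (Fiber.mk hP : Fiber p x)))
  m : P ⟶ T.F'.obj x
  m_lift : p.IsHomLift (𝟙 x) m
  m_fac_left : inl ≫ m = α.1.app x
  m_fac_right : inr ≫ m = canT

/-- Data exhibiting the relative matching map
`S(x) ⟶ Mat_x S ×_{Mat_x T} T(x)` of `α : S ⟶ T` at `x`. -/
structure RelMatchData (p : E ⥤ C) (RS : ReedyStructure C) {S T : Sect p}
    (α : S ⟶ T) (x : C) extends MatchMapData p RS α x where
  canS : S.F'.obj x ⟶ MS.pt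
  canS_lift : p.IsHomLift (𝟙 x) canS
  canS_fac : ∀ ⦃d : C⦄ (f : x ⟶ (𝟭 C).obj d) (hf : matchIdx RS x f),
    canS ≫ MS.π f hf = S.F'.map f
  canT : T.F'.obj x ⟶ MT.pt
  canT_lift : p.IsHomLift (𝟙 x) canT
  canT_fac : ∀ ⦃d : C⦄ (f : x ⟶ (𝟭 C).obj d) (hf : matchIdx RS x f),
    canT ≫ MT.π f hf = T.F'.map f
  Q : E
  hQ : p.obj Q = x
  pr₁ : Q ⟶ MS.pt
  pr₁_lift : p.IsHomLift (𝟙 x) pr₁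
  pr₂ : Q ⟶ T.F'.obj x
  pr₂_lift : p.IsHomLift (𝟙 x) pr₂
  isPullback : IsPullback (C := Fiber p x)
    ((⟨pr₁, pr₁_lift⟩ : (Fiber.mk hQ : Fiber p x) ⟶ (Fiber.mk MS.hpt : Fiber p x)))
    ((⟨pr₂, pr₂_lift⟩ : (Fiber.mk hQ : Fiber p x) ⟶
      (Fiber.mk (T.obj_over x) : Fiber p x)))
    ((⟨matMap, matMap_lift⟩ : (Fiber.mk MS.hpt : Fiber p x) ⟶
      (Fiber.mk MT.hpt : Fiber p x)))
    ((⟨canT, canT_lift⟩ : (Fiber.mk (T.obj_over x) : Fiber p x) ⟶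
      (Fiber.mk MT.hpt : Fiber p x)))
  m : S.F'.obj x ⟶ Q
  m_lift : p.IsHomLift (𝟙 x) m
  m_fac₁ : m ≫ pr₁ = canS
  m_fac₂ : m ≫ pr₂ = α.1.app x

variable (RS)

/-- Reedy weak equivalences: objectwise weak equivalences of sections. -/
def ReedyWeq (MSF : ModelSemifibration p RS) : MorphismProperty (Sect p) :=
  fun _ _ α => ∀ x : C, (MSF.ms x).W (Sect.evHom α x)

/-- Reedy cofibrations: all relative latching maps are cofibrations in the fibres. -/
def ReedyCof (MSF : ModelSemifibration p RS) : MorphismProperty (Sect p) :=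
  fun _ T α => ∀ (x : C) (Dt : RelLatchData p RS α x),
    (MSF.ms x).Cof ((⟨Dt.m, Dt.m_lift⟩ :
      (Fiber.mk Dt.hP : Fiber p x) ⟶ (Fiber.mk (T.obj_over x) : Fiber p x)))

/-- Reedy fibrations: all relative matching maps are fibrations in the fibres. -/
def ReedyFib (MSF : ModelSemifibration p RS) : MorphismProperty (Sect p) :=
  fun S _ α => ∀ (x : C) (Dt : RelMatchData p RS α x),
    (MSF.ms x).Fib ((⟨Dt.m, Dt.m_lift⟩ :
      (Fiber.mk (S.obj_over x) : Fiber p x) ⟶ (Fiber.mk Dt.hQ : Fiber p x)))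

/-- Left admissibility: if all relative latching maps of `α` are (trivial)
cofibrations, then all induced maps of latching objects are (trivial) cofibrations. -/
def LeftAdmissible (MSF : ModelSemifibration p RS) : Prop :=
  ∀ {S T : Sect p} (α : S ⟶ T),
    ((ReedyCof RS MSF α →
      ∀ (y : C) (LM : LatchMapData p RS α y),
        (MSF.ms y).Cof ((⟨LM.latMap, LM.latMap_lift⟩ :
          (Fiber.mk LM.DS.hpt : Fiber p y) ⟶ (Fiber.mk LM.DT.hpt : Fiber p y)))) ∧
    ((∀ (x : C) (Dt : RelLatchData p RS α x),
        (MSF.ms x).Cof ((⟨Dt.m, Dt.m_lift⟩ :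
          (Fiber.mk Dt.hP : Fiber p x) ⟶ (Fiber.mk (T.obj_over x) : Fiber p x))) ∧
        (MSF.ms x).W ((⟨Dt.m, Dt.m_lift⟩ :
          (Fiber.mk Dt.hP : Fiber p x) ⟶ (Fiber.mk (T.obj_over x) : Fiber p x)))) →
      ∀ (y : C) (LM : LatchMapData p RS α y),
        (MSF.ms y).Cof ((⟨LM.latMap, LM.latMap_lift⟩ :
          (Fiber.mk LM.DS.hpt : Fiber p y) ⟶ (Fiber.mk LM.DT.hpt : Fiber p y))) ∧
        (MSF.ms y).W ((⟨LM.latMap, LM.latMap_lift⟩ :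
          (Fiber.mk LM.DS.hpt : Fiber p y) ⟶ (Fiber.mk LM.DT.hpt : Fiber p y)))))

/-- Right admissibility: the dual condition on matching objects. -/
def RightAdmissible (MSF : ModelSemifibration p RS) : Prop :=
  ∀ {S T : Sect p} (α : S ⟶ T),
    ((ReedyFib RS MSF α →
      ∀ (y : C) (LM : MatchMapData p RS α y),
        (MSF.ms y).Fib ((⟨LM.matMap, LM.matMap_lift⟩ :
          (Fiber.mk LM.MS.hpt : Fiber p y) ⟶ (Fiber.mk LM.MT.hpt : Fiber p y)))) ∧
    ((∀ (x : C) (Dt : RelMatchData p RS α x),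
        (MSF.ms x).Fib ((⟨Dt.m, Dt.m_lift⟩ :
          (Fiber.mk (S.obj_over x) : Fiber p x) ⟶ (Fiber.mk Dt.hQ : Fiber p x))) ∧
        (MSF.ms x).W ((⟨Dt.m, Dt.m_lift⟩ :
          (Fiber.mk (S.obj_over x) : Fiber p x) ⟶ (Fiber.mk Dt.hQ : Fiber p x)))) →
      ∀ (y : C) (LM : MatchMapData p RS α y),
        (MSF.ms y).Fib ((⟨LM.matMap, LM.matMap_lift⟩ :
          (Fiber.mk LM.MS.hpt : Fiber p y) ⟶ (Fiber.mk LM.MT.hpt : Fiber p y))) ∧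
        (MSF.ms y).W ((⟨LM.matMap, LM.matMap_lift⟩ :
          (Fiber.mk LM.MS.hpt : Fiber p y) ⟶ (Fiber.mk LM.MT.hpt : Fiber p y)))))

end ReedySections

/-! The component `α_y` factors as `A(y) ⟶ Lat_y B ⊔_{Lat_y A} A(y) ⟶ B(y)`. The second map is
the relative latching map, and the first is a pushout of `Lat_y α`, which admissibility makes a
(trivial) cofibration. Cofibrations and trivial cofibrations are the maps with the left lifting
property against trivial fibrations, resp. fibrations (retract argument), so both classes are
closed under pushout and composition. -/

lemma ClosedUnderRetracts.isStableUnderRetracts {M : Type u₃} [Category.{v₃} M]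
    {P : MorphismProperty M} (hP : ClosedUnderRetracts P) : P.IsStableUnderRetracts where
  of_retract h hg := hP _ _ h.i.left h.r.left h.i.right h.r.right h.retract_left
    h.retract_right h.i_w h.r_w.symm hg

namespace ModelStructure

open MorphismProperty

variable {M : Type u₃} [Category.{v₃} M] (MS : ModelStructure M)

instance : MS.Cof.IsStableUnderRetracts :=
  ClosedUnderRetracts.isStableUnderRetracts MS.Cof_retract

instance : MS.W.IsStableUnderRetracts :=
  ClosedUnderRetracts.isStableUnderRetracts MS.W_retract

lemma hasLiftingProperty {A B X Y : M} {i : A ⟶ B} {f : X ⟶ Y} (hi : MS.Cof i)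
    (hf : MS.Fib f) (hW : MS.W i ∨ MS.W f) : HasLiftingProperty i f where
  sq_hasLift {a b} sq := by
    obtain ⟨l, hl₁, hl₂⟩ := MS.lifting i f a b hi hf hW sq.w
    exact ⟨⟨{ l := l, fac_left := hl₁, fac_right := hl₂ }⟩⟩

lemma llp_fib_inf_w : (MS.Fib ⊓ MS.W).llp = MS.Cof := by
  have : HasFactorization MS.Cof (MS.Fib ⊓ MS.W) := ⟨fun f => by
    obtain ⟨Z, i, q, hi, hq, hw, hfac⟩ := MS.factor₁ f
    exact ⟨{ Z := Z, i := i, p := q, fac := hfac, hi := hi, hp := ⟨hq, hw⟩ }⟩⟩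
  exact llp_eq_of_le_llp_of_hasFactorization_of_isStableUnderRetracts
    fun _ _ i hi _ _ f hf => MS.hasLiftingProperty hi hf.1 (Or.inr hf.2)

lemma llp_fib : MS.Fib.llp = MS.Cof ⊓ MS.W := by
  have : HasFactorization (MS.Cof ⊓ MS.W) MS.Fib := ⟨fun f => by
    obtain ⟨Z, i, q, hi, hw, hq, hfac⟩ := MS.factor₂ f
    exact ⟨{ Z := Z, i := i, p := q, fac := hfac, hi := ⟨hi, hw⟩, hp := hq }⟩⟩
  exact llp_eq_of_le_llp_of_hasFactorization_of_isStableUnderRetracts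
    fun _ _ i hi _ _ f hf => MS.hasLiftingProperty hi.1 hf (Or.inl hi.2)

instance : MS.Cof.IsStableUnderCobaseChange := by
  rw [← llp_fib_inf_w]; infer_instance

instance : MS.Cof.IsStableUnderComposition := by
  rw [← llp_fib_inf_w]; infer_instance

instance : (MS.Cof ⊓ MS.W).IsStableUnderCobaseChange := by
  rw [← llp_fib]; infer_instance

instance : (MS.Cof ⊓ MS.W).IsStableUnderComposition := by
  rw [← llp_fib]; infer_instance

lemma hasPushouts (MS : ModelStructure M) : HasPushouts M :=
  have := MS.hasColimits
  inferInstance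

end ModelStructure

namespace LatchData

variable {C : Type u₁} [Category.{v₁} C] {E : Type u₂} [Category.{v₂} E]
  {D : Type u₃} [Category.{v₃} D] {F : D ⥤ C} {p : E ⥤ C} {S : SectOver F p} {c : C}
  {Idx : ∀ ⦃d : D⦄, (F.obj d ⟶ c) → Prop}

lemma hom_ext (L : LatchData p S c Idx) {Z : E} (hZ : p.obj Z = c) {u v : L.pt ⟶ Z}
    (hu : p.IsHomLift (𝟙 c) u) (hv : p.IsHomLift (𝟙 c) v)
    (h : ∀ ⦃d : D⦄ (f : F.obj d ⟶ c) (hf : Idx f), L.ι f hf ≫ u = L.ι f hf ≫ v) :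
    u = v := by
  obtain ⟨w, -, w_uniq⟩ := L.isLatching.2.2 Z hZ (fun _ f hf => L.ι f hf ≫ u)
    (fun _ f hf => by have := L.isLatching.1 f hf; infer_instance)
    (fun g f' hf' hgf => by rw [L.isLatching.2.1 g f' hf' hgf, Category.assoc])
  rw [w_uniq u ⟨hu, fun _ _ _ => rfl⟩, w_uniq v ⟨hv, fun _ f hf => (h f hf).symm⟩]

lemma exists_map {T : SectOver F p} (α : S ⟶ T) (LS : LatchData p S c Idx)
    (LT : LatchData p T c Idx) :
    ∃ l : LS.pt ⟶ LT.pt, p.IsHomLift (𝟙 c) l ∧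
      ∀ ⦃d : D⦄ (f : F.obj d ⟶ c) (hf : Idx f), LS.ι f hf ≫ l = α.1.app d ≫ LT.ι f hf := by
  obtain ⟨l, hl, -⟩ := LS.isLatching.2.2 LT.pt LT.hpt (fun d f hf => α.1.app d ≫ LT.ι f hf)
    (fun d f hf => by have := α.2 d; have := LT.isLatching.1 f hf; infer_instance)
    (fun g f' hf' hgf => by rw [LT.isLatching.2.1 g f' hf' hgf, α.1.naturality_assoc])
  exact ⟨l, hl⟩

end LatchData

section RelativeLatching

variable {C : Type u₁} [Category.{v₁} C] {E : Type u₂} [Category.{v₂} E] {p : E ⥤ C}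

lemma Sect.map_isHomLift (S : Sect p) {d y : C} (f : d ⟶ y) :
    p.IsHomLift f (S.F'.map f) :=
  IsHomLift.of_fac' p f (S.F'.map f) (S.obj_over d) (S.obj_over y)
    (Functor.congr_hom S.over_eq f)

lemma LatchData.exists_comparison {S : Sect p} {c : C}
    {Idx : ∀ ⦃d : C⦄, ((𝟭 C).obj d ⟶ c) → Prop} (L : LatchData p S c Idx) :
    ∃ k : L.pt ⟶ S.F'.obj c, p.IsHomLift (𝟙 c) k ∧
      ∀ ⦃d : C⦄ (f : (𝟭 C).obj d ⟶ c) (hf : Idx f), L.ι f hf ≫ k = S.F'.map f := by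
  obtain ⟨k, hk, -⟩ := L.isLatching.2.2 (S.F'.obj c) (S.obj_over c) (fun _ f _ => S.F'.map f)
    (fun _ f _ => S.map_isHomLift f) (fun g f' _ _ => S.F'.map_comp ((𝟭 C).map g) f')
  exact ⟨k, hk⟩

variable {RS : ReedyStructure C} {S T : Sect p} {α : S ⟶ T} {x : C}

lemma RelLatchData.nonempty [HasPushouts (Fiber p x)] (LS : LatchData p S x (latchIdx RS x))
    (LT : LatchData p T x (latchIdx RS x)) : Nonempty (RelLatchData p RS α x) := by
  obtain ⟨l, hl, hl_fac⟩ := LatchData.exists_map α LS LT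
  obtain ⟨kS, hkS, hkS_fac⟩ := LS.exists_comparison
  obtain ⟨kT, hkT, hkT_fac⟩ := LT.exists_comparison
  let fkS : (Fiber.mk LS.hpt : Fiber p x) ⟶ Fiber.mk (S.obj_over x) := ⟨kS, hkS⟩
  let fl : (Fiber.mk LS.hpt : Fiber p x) ⟶ Fiber.mk LT.hpt := ⟨l, hl⟩
  let fkT : (Fiber.mk LT.hpt : Fiber p x) ⟶ Fiber.mk (T.obj_over x) := ⟨kT, hkT⟩
  have hsq : fkS ≫ Sect.evHom α x = fl ≫ fkT := by
    refine Subtype.ext (LS.hom_ext (T.obj_over x) (fkS ≫ _).2 (fl ≫ fkT).2 fun d f hf => ?_)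
    change LS.ι f hf ≫ kS ≫ α.1.app x = LS.ι f hf ≫ l ≫ kT
    rw [reassoc_of% hkS_fac f hf, reassoc_of% hl_fac f hf, hkT_fac f hf]
    exact α.1.naturality f
  let m := pushout.desc _ _ hsq
  exact ⟨{
    DS := LS, DT := LT, latMap := l, latMap_lift := hl, latMap_fac := hl_fac,
    canS := kS, canS_lift := hkS, canS_fac := hkS_fac,
    canT := kT, canT_lift := hkT, canT_fac := hkT_fac,
    P := (pushout fkS fl).1, hP := (pushout fkS fl).2,
    inl := (pushout.inl fkS fl).1, inl_lift := (pushout.inl fkS fl).2,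
    inr := (pushout.inr fkS fl).1, inr_lift := (pushout.inr fkS fl).2,
    isPushout := IsPushout.of_hasPushout fkS fl,
    m := m.1, m_lift := m.2,
    m_fac_left := congrArg Subtype.val (pushout.inl_desc _ _ hsq),
    m_fac_right := congrArg Subtype.val (pushout.inr_desc _ _ hsq) }⟩

lemma RelLatchData.evHom_eq (Dt : RelLatchData p RS α x) :
    Sect.evHom α x =
      (⟨Dt.inl, Dt.inl_lift⟩ : (Fiber.mk (S.obj_over x) : Fiber p x) ⟶ Fiber.mk Dt.hP) ≫
        (⟨Dt.m, Dt.m_lift⟩ : (Fiber.mk Dt.hP : Fiber p x) ⟶ Fiber.mk (T.obj_over x)) :=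
  Subtype.ext Dt.m_fac_left.symm

lemma RelLatchData.evHom_mem (Dt : RelLatchData p RS α x) {P : MorphismProperty (Fiber p x)}
    [P.IsStableUnderCobaseChange] [P.IsStableUnderComposition]
    (hl : P (⟨Dt.latMap, Dt.latMap_lift⟩ :
      (Fiber.mk Dt.DS.hpt : Fiber p x) ⟶ Fiber.mk Dt.DT.hpt))
    (hm : P (⟨Dt.m, Dt.m_lift⟩ : (Fiber.mk Dt.hP : Fiber p x) ⟶ Fiber.mk (T.obj_over x))) :
    P (Sect.evHom α x) :=
  Dt.evHom_eq ▸ P.comp_mem _ _ (P.of_isPushout Dt.isPushout hl) hm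

end RelativeLatching

theorem reedy_cofibration_objectwise_general {C : Type u₁} [Category.{v₁} C]
    {E : Type u₂} [Category.{v₂} E] (p : E ⥤ C) (RS : ReedyStructure C)
    (MSF : ModelSemifibration p RS)
    (hlatch : ∀ (S : Sect p) (x : C), Nonempty (LatchData p S x (latchIdx RS x)))
    (hladm : LeftAdmissible RS MSF)
    {S T : Sect p} (α : S ⟶ T) :
    (ReedyCof RS MSF α → ∀ y : C, (MSF.ms y).Cof (Sect.evHom α y)) ∧
    ((∀ (x : C) (Dt : RelLatchData p RS α x),
        (MSF.ms x).Cof ((⟨Dt.m, Dt.m_lift⟩ :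
          (Fiber.mk Dt.hP : Fiber p x) ⟶ (Fiber.mk (T.obj_over x) : Fiber p x))) ∧
        (MSF.ms x).W ((⟨Dt.m, Dt.m_lift⟩ :
          (Fiber.mk Dt.hP : Fiber p x) ⟶ (Fiber.mk (T.obj_over x) : Fiber p x)))) →
      ∀ y : C, (MSF.ms y).Cof (Sect.evHom α y) ∧ (MSF.ms y).W (Sect.evHom α y)) := by
  have relLatch (y : C) : RelLatchData p RS α y :=
    have := (MSF.ms y).hasPushouts
    (RelLatchData.nonempty (hlatch S y).some (hlatch T y).some).some
  refine ⟨fun hcof y => ?_, fun htriv y => ?_⟩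
  · exact (relLatch y).evHom_mem ((hladm α).1 hcof y _) (hcof y _)
  · exact (relLatch y).evHom_mem (P := (MSF.ms y).Cof ⊓ (MSF.ms y).W)
      ((hladm α).2 htriv y _) (htriv y _)

/-- For an admissible model semifibration over a Reedy category, if all relative latching
maps of a map of sections `α : A ⟶ B` are (trivial) cofibrations, then each component
`α_y : A(y) ⟶ B(y)` is a (trivial) cofibration in the fibre. -/
theorem reedy_cofibration_objectwise {C : Type u₁} [Category.{v₁} C]
    {E : Type u₂} [Category.{v₂} E] (p : E ⥤ C) (RS : ReedyStructure C)
    (MSF : ModelSemifibration p RS)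
    (hlatch : ∀ (S : Sect p) (x : C), Nonempty (LatchData p S x (latchIdx RS x)))
    (hmatch : ∀ (S : Sect p) (x : C), Nonempty (MatchData p S x (matchIdx RS x)))
    (hladm : LeftAdmissible RS MSF) (hradm : RightAdmissible RS MSF)
    {S T : Sect p} (α : S ⟶ T) :
    (ReedyCof RS MSF α → ∀ y : C, (MSF.ms y).Cof (Sect.evHom α y)) ∧
    ((∀ (x : C) (Dt : RelLatchData p RS α x),
        (MSF.ms x).Cof ((⟨Dt.m, Dt.m_lift⟩ :
          (Fiber.mk Dt.hP : Fiber p x) ⟶ (Fiber.mk (T.obj_over x) : Fiber p x))) ∧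
        (MSF.ms x).W ((⟨Dt.m, Dt.m_lift⟩ :
          (Fiber.mk Dt.hP : Fiber p x) ⟶ (Fiber.mk (T.obj_over x) : Fiber p x)))) →
      ∀ y : C, (MSF.ms y).Cof (Sect.evHom α y) ∧ (MSF.ms y).W (Sect.evHom α y)) :=
  reedy_cofibration_objectwise_general p RS MSF hlatch hladm α
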